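/- arXiv:1806.01462 — 2 statements merged into one kernel-verified Lean document; each statement's English description precedes it below -/
import Mathlib

section
/- Let X be a metric space, {S(t)}_{t≥0} a semigroup of continuous maps on X, and B ⊆ X an absorbing set (for every bounded set B' there exists T such that S(t)B' ⊆ B for all t ≥ T) whose forward orbit ⋃_{t≥0} S(t)B is relatively compact. Then A = ω(B) is nonempty, compact, invariant (S(t)A = A for all t), and attracts every bounded set: for every bounded B' ⊆ X, dist(S(t)B', A) → 0 as t → ∞. -/
open Set Filter Metric Topology

/-- Abstract global attractor existence theorem: a continuous semigroup with a
bounded absorbing set whose forward orbit is relatively compact possesses a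
nonempty, compact, invariant ω-limit set attracting every bounded set. -/
theorem stmt10
    {X : Type*} [MetricSpace X]
    (S : ℝ → X → X)
    (hid : S 0 = id)
    (hsemi : ∀ t₁ ≥ (0:ℝ), ∀ t₂ ≥ (0:ℝ), S (t₁ + t₂) = S t₁ ∘ S t₂)
    (hcont : ∀ t ≥ (0:ℝ), Continuous (S t))
    (B : Set X) (hB : B.Nonempty)
    (habs : ∀ B' : Set X, Bornology.IsBounded B' → ∃ T : ℝ,
      ∀ t ≥ T, S t '' B' ⊆ B)
    (hcpt : IsCompact (closure (⋃ t ∈ Set.Ici (0:ℝ), S t '' B))) :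
    let A := ⋂ s ∈ Set.Ici (0:ℝ), closure (⋃ t ∈ Set.Ici s, S t '' B)
    A.Nonempty ∧ IsCompact A ∧ (∀ t ≥ (0:ℝ), S t '' A = A) ∧
      (∀ B' : Set X, Bornology.IsBounded B' →
        ∀ ε > (0:ℝ), ∃ T : ℝ, ∀ t ≥ T, ∀ x ∈ B', ∃ a ∈ A, dist (S t x) a < ε) := by
  intro A
  set K : ℝ → Set X := fun s => closure (⋃ t ∈ Set.Ici s, S t '' B) with hKdef
  have hAeq : A = ⋂ s ∈ Set.Ici (0:ℝ), K s := rfl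
  have hcomp : ∀ t ≥ (0:ℝ), ∀ τ ≥ (0:ℝ), ∀ x, S t (S τ x) = S (t + τ) x := by
    intro t ht τ hτ x
    rw [hsemi t ht τ hτ]; rfl
  have hmono : ∀ {s s' : ℝ}, s ≤ s' → K s' ⊆ K s := by
    intro s s' h
    exact closure_mono (biUnion_subset_biUnion_left (Ici_subset_Ici.mpr h))
  have hKcl : ∀ s, IsClosed (K s) := fun s => isClosed_closure
  have hK0 : IsCompact (K 0) := hcpt
  have hKcpt : ∀ s ≥ (0:ℝ), IsCompact (K s) := fun s hs =>
    hK0.of_isClosed_subset (hKcl s) (hmono hs)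
  have hKne : ∀ s, (K s).Nonempty := by
    intro s
    obtain ⟨x, hx⟩ := hB
    exact ⟨S s x, subset_closure (mem_biUnion (le_refl s) ⟨x, hx, rfl⟩)⟩
  -- rewrite A as an iInter over the subtype
  have hAeq' : A = ⋂ s : Set.Ici (0:ℝ), K s := by
    rw [hAeq]; exact biInter_eq_iInter _ _
  have hdir : Directed (· ⊇ ·) (fun s : Set.Ici (0:ℝ) => K s) := by
    intro s s'
    rcases le_total (s : ℝ) (s' : ℝ) with h | h
    · exact ⟨s', hmono h, subset_rfl⟩
    · exact ⟨s, subset_rfl, hmono h⟩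
  have hAne : A.Nonempty := by
    rw [hAeq']
    exact IsCompact.nonempty_iInter_of_directed_nonempty_isCompact_isClosed
      _ hdir (fun s => hKne s) (fun s => hKcpt s s.2) (fun s => hKcl s)
  have hAsub : ∀ s ≥ (0:ℝ), A ⊆ K s := by
    intro s hs
    rw [hAeq]
    exact biInter_subset_of_mem hs
  have hAcpt : IsCompact A := by
    refine hK0.of_isClosed_subset ?_ (hAsub 0 le_rfl)
    rw [hAeq]
    exact isClosed_biInter (fun s _ => hKcl s)
  -- forward invariance : S t '' K s ⊆ K (s + t)
  have hfwdK : ∀ t ≥ (0:ℝ), ∀ s ≥ (0:ℝ), S t '' K s ⊆ K (s + t) := by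
    intro t ht s hs
    have h1 : S t '' K s ⊆ closure (S t '' ⋃ τ ∈ Set.Ici s, S τ '' B) :=
      image_closure_subset_closure_image (hcont t ht)
    refine h1.trans (closure_mono ?_)
    rintro z ⟨w, hw, rfl⟩
    simp only [mem_iUnion, exists_prop] at hw ⊢
    obtain ⟨τ, hτ, x, hx, rfl⟩ := hw
    refine ⟨t + τ, by simp only [mem_Ici] at hτ ⊢; linarith, x, hx, ?_⟩
    exact (hcomp t ht τ (le_trans hs hτ) x).symm
  have hfwdA : ∀ t ≥ (0:ℝ), S t '' A ⊆ A := by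
    intro t ht
    rw [hAeq]
    rintro z ⟨a, ha, rfl⟩
    refine mem_biInter (fun s hs => ?_)
    have : S t a ∈ K (s + t) := hfwdK t ht s hs ⟨a, hAsub s hs ha, rfl⟩
    exact hmono (by linarith) this
  have hinv : ∀ t ≥ (0:ℝ), S t '' A = A := by
    intro t ht
    refine Set.Subset.antisymm (hfwdA t ht) ?_
    intro a ha
    -- pick approximating sequence
    have hsel : ∀ n : ℕ, ∃ τ, τ ≥ t + n ∧ ∃ x ∈ B, dist a (S τ x) < 1 / (n + 1) := by
      intro n
      have hmem : a ∈ K (t + n) := hAsub (t + n) (by positivity) ha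
      rw [hKdef] at hmem
      rw [Metric.mem_closure_iff] at hmem
      obtain ⟨b, hb, hd⟩ := hmem (1 / (n + 1)) (by positivity)
      simp only [mem_iUnion, exists_prop] at hb
      obtain ⟨τ, hτ, x, hx, rfl⟩ := hb
      exact ⟨τ, hτ, x, hx, hd⟩
    choose τ hτ x hx hdist using hsel
    have hτ0 : ∀ n : ℕ, (0:ℝ) ≤ τ n - t := by
      intro n
      have := hτ n
      have : t + (n:ℝ) ≤ τ n := this
      have hn : (0:ℝ) ≤ n := Nat.cast_nonneg n
      linarith
    set y : ℕ → X := fun n => S (τ n - t) (x n) with hydef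
    have hyK0 : ∀ n, y n ∈ K 0 := by
      intro n
      exact subset_closure (mem_biUnion (hτ0 n) ⟨x n, hx n, rfl⟩)
    obtain ⟨ylim, hylim_mem, φ, hφ, hφtend⟩ := hK0.tendsto_subseq hyK0
    -- S (τ n) (x n) tends to a
    have hwa : Tendsto (fun n => S (τ n) (x n)) atTop (𝓝 a) := by
      rw [tendsto_iff_dist_tendsto_zero]
      refine squeeze_zero (g := fun n : ℕ => 1 / ((n:ℝ) + 1)) (fun n => dist_nonneg) (fun n => ?_) ?_
      · exact (dist_comm (S (τ n) (x n)) a ▸ (hdist n).le)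
      · exact tendsto_one_div_add_atTop_nhds_zero_nat
    -- S t (y n) = S (τ n) (x n)
    have hSty : ∀ n, S t (y n) = S (τ n) (x n) := by
      intro n
      rw [hydef]
      simp only
      rw [hcomp t ht (τ n - t) (hτ0 n)]
      ring_nf
    -- ylim ∈ A
    have hylimA : ylim ∈ A := by
      rw [hAeq]
      refine mem_biInter (fun s hs => ?_)
      refine (hKcl s).mem_of_tendsto hφtend ?_
      filter_upwards [eventually_ge_atTop ⌈s⌉₊] with k hk
      have hτk : τ (φ k) - t ≥ s := by
        have h1 : t + (φ k : ℝ) ≤ τ (φ k) := hτ (φ k)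
        have h2 : (k:ℝ) ≤ (φ k : ℝ) := Nat.cast_le.mpr (hφ.le_apply)
        have h3 : s ≤ (k:ℝ) := le_trans (Nat.le_ceil s) (Nat.cast_le.mpr hk)
        linarith
      exact subset_closure (mem_biUnion hτk ⟨x (φ k), hx (φ k), rfl⟩)
    -- S t ylim = a
    have h1 : Tendsto (fun k => S t (y (φ k))) atTop (𝓝 (S t ylim)) :=
      ((hcont t ht).tendsto ylim).comp hφtend
    have h2 : Tendsto (fun k => S t (y (φ k))) atTop (𝓝 a) := by
      simp only [hSty]
      exact hwa.comp hφ.tendsto_atTop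
    have : S t ylim = a := tendsto_nhds_unique h1 h2
    exact ⟨ylim, hylimA, this⟩
  refine ⟨hAne, hAcpt, hinv, ?_⟩
  -- attraction
  intro B' hB' ε hε
  -- find s₀ with K s₀ ⊆ thickening ε A
  have hU : ∀ x ∈ ⋂ s : Set.Ici (0:ℝ), K s, Metric.thickening ε A ∈ 𝓝 x := by
    intro x hxmem
    rw [← hAeq'] at hxmem
    exact isOpen_thickening.mem_nhds (self_subset_thickening hε A hxmem)
  have : Nonempty (Set.Ici (0:ℝ)) := ⟨⟨0, Set.self_mem_Ici⟩⟩
  obtain ⟨s₀, hs₀⟩ := exists_subset_nhds_of_isCompact' hdir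
    (fun s => hKcpt s s.2) (fun s => hKcl s) hU
  obtain ⟨T', hT'⟩ := habs B' hB'
  set T'' := max T' 0 with hT''def
  refine ⟨T'' + (s₀ : ℝ), fun t htt z hz => ?_⟩
  have hT''0 : (0:ℝ) ≤ T'' := le_max_right _ _
  have hts : t - T'' ≥ (s₀ : ℝ) := by linarith
  have hts0 : (0:ℝ) ≤ t - T'' := le_trans s₀.2 hts
  have hSz : S T'' z ∈ B := hT' T'' (le_max_left _ _) ⟨z, hz, rfl⟩
  have hStz : S t z ∈ K s₀ := by
    have : S (t - T'') (S T'' z) = S t z := by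
      rw [hcomp (t - T'') hts0 T'' hT''0]; ring_nf
    rw [← this]
    exact subset_closure (mem_biUnion hts ⟨S T'' z, hSz, rfl⟩)
  have := hs₀ hStz
  rw [Metric.mem_thickening_iff] at this
  obtain ⟨aa, haa, hd⟩ := this
  exact ⟨aa, haa, hd⟩
end

section
/- Let H₂ and H₃ be Banach spaces with H₃ compactly embedded in H₂, and let {S(t)} be a semigroup of continuous maps on H₃ possessing a bounded absorbing set B ⊆ H₃. Then for any sequence t_n → ∞ and any bounded sequence (x_n) in H₃, the sequence (S(t_n)x_n) has a subsequence converging in H₂ to an element of ⋂_{s≥0} closure_{H₂}(⋃_{t≥s} S(t)B). -/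
open Set Filter

/-- Compactness step in Ghidaglia's weak attractor construction: boundedness of
orbits in `H₃` plus compact embedding `H₃ ↪ H₂` yields, along any time sequence
tending to infinity, convergent (in `H₂`) subsequences with limits in the
ω-limit set of the absorbing set. -/
theorem stmt14
    {H₂ H₃ : Type*} [NormedAddCommGroup H₂] [NormedSpace ℝ H₂]
    [NormedAddCommGroup H₃] [NormedSpace ℝ H₃]
    (e : H₃ →L[ℝ] H₂)
    (hcompact : ∀ s : Set H₃, Bornology.IsBounded s → IsCompact (closure (e '' s)))
    (S : ℝ → H₃ → H₃)
    (hid : S 0 = id)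
    (hsemi : ∀ t₁ ≥ (0:ℝ), ∀ t₂ ≥ (0:ℝ), S (t₁ + t₂) = S t₁ ∘ S t₂)
    (hcont : ∀ t ≥ (0:ℝ), Continuous (S t))
    (B : Set H₃) (hBbd : Bornology.IsBounded B)
    (habs : ∀ B' : Set H₃, Bornology.IsBounded B' → ∃ T : ℝ,
      ∀ t ≥ T, S t '' B' ⊆ B)
    (tn : ℕ → ℝ) (htn : Tendsto tn atTop atTop)
    (xn : ℕ → H₃) (hxn : Bornology.IsBounded (Set.range xn)) :
    ∃ φ : ℕ → ℕ, StrictMono φ ∧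
      ∃ y ∈ ⋂ s ∈ Set.Ici (0:ℝ), closure (e '' (⋃ t ∈ Set.Ici s, S t '' B)),
        Tendsto (fun n => e (S (tn (φ n)) (xn (φ n)))) atTop (nhds y) := by
  obtain ⟨T₀, hT₀⟩ := habs (Set.range xn) hxn
  obtain ⟨T₁, hT₁⟩ := habs B hBbd
  set T : ℝ := max T₀ 0 with hT
  have hTnn : (0:ℝ) ≤ T := le_max_right _ _
  have hTabs : ∀ n, S T (xn n) ∈ B := fun n =>
    hT₀ T (le_max_left _ _) ⟨xn n, mem_range_self n, rfl⟩
  -- decomposition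
  have hdec : ∀ n, T ≤ tn n → S (tn n) (xn n) = S (tn n - T) (S T (xn n)) := by
    intro n hn
    have h := hsemi (tn n - T) (by linarith) T hTnn
    have : tn n - T + T = tn n := by ring
    rw [this] at h
    rw [h]; rfl
  -- Claim A: eventually in the tail union
  have hA : ∀ s : ℝ, 0 ≤ s → ∀ᶠ n in atTop,
      S (tn n) (xn n) ∈ ⋃ t ∈ Set.Ici s, S t '' B := by
    intro s hs
    filter_upwards [htn.eventually_ge_atTop (s + T)] with n hn
    rw [hdec n (by linarith)]
    exact mem_biUnion (show tn n - T ∈ Set.Ici s by simp; linarith)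
      ⟨S T (xn n), hTabs n, rfl⟩
  -- Claim B: eventually in B
  have hB : ∀ᶠ n in atTop, S (tn n) (xn n) ∈ B := by
    filter_upwards [htn.eventually_ge_atTop (T + T₁ + |T₁|)] with n hn
    have h1 : T ≤ tn n := by
      have := abs_nonneg T₁; have := neg_abs_le T₁; linarith
    rw [hdec n h1]
    exact hT₁ (tn n - T) (by have := le_abs_self T₁; linarith)
      ⟨S T (xn n), hTabs n, rfl⟩
  obtain ⟨N, hN⟩ := eventually_atTop.mp hB
  -- subsequence via compactness
  have hcpt := hcompact B hBbd
  have hmem : ∀ n : ℕ, e (S (tn (n + N)) (xn (n + N))) ∈ closure (e '' B) :=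
    fun n => subset_closure ⟨_, hN (n + N) (Nat.le_add_left _ _), rfl⟩
  obtain ⟨y, hy, ψ, hψ, hconv⟩ := hcpt.tendsto_subseq hmem
  refine ⟨fun n => ψ n + N, fun a b hab => by simpa using hψ hab, y, ?_, hconv⟩
  simp only [Set.mem_iInter]
  intro s hs
  have hφ : Tendsto (fun n => ψ n + N) atTop atTop :=
    tendsto_atTop_mono (fun n => le_trans (hψ.id_le n) (Nat.le_add_right _ _))
      tendsto_id
  refine mem_closure_of_tendsto hconv ?_
  filter_upwards [hφ.eventually (hA s hs)] with n hn
  exact ⟨_, hn, rfl⟩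
end
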